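/- For reals α ≥ 2 and λ₀ ∈ (0,1), with σ_γ² = (1−λ₀)/α, the von Neumann entropy formula for the bipartition case β = α holds: −(α/(2πσ_γ²)) ∫_0^{4σ_γ²} ln(x)√((4σ_γ² − x)x) dx − λ₀ ln λ₀ = (1−λ₀)ln(α/(4(1−λ₀))) − (λ₀/2)(4ln 2 − 1) − λ₀ ln λ₀ + 2ln 2 − 1/2. -/

import Mathlib

/-!
Substituting `x = 4 s sin² θ` turns the integral into
`32 s² ∫₀^{π/2} sin² θ cos² θ (log (4 s) + 2 log sin θ) dθ`, so everything reduces to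
`K = ∫₀^{π/2} sin² cos² log sin`. Two linear relations between `K` and
`W = ∫₀^{π/2} sin² log sin` determine it: integrating the derivative of `sin³ cos log sin` gives
`W - 4K = π/16`, and the symmetry `θ ↦ π/2 - θ` together with `sin θ cos θ = sin (2θ) / 2`
and the duplication `∫₀^{π/2} f (2θ) = ∫₀^{π/2} f` gives `W - 8K = (π/4) log 2`.
-/

open Real intervalIntegral

lemma continuous_sq_mul_log : Continuous fun x : ℝ => x ^ 2 * log x := by
  have : Continuous fun x : ℝ => x * (x * log x) := continuous_id.mul continuous_mul_log
  simpa only [← mul_assoc, ← sq] using this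

lemma continuous_sin_sq_mul_log_sin : Continuous fun x => sin x ^ 2 * log (sin x) :=
  continuous_sq_mul_log.comp continuous_sin

lemma continuous_sin_sq_mul_cos_sq_mul_log_sin :
    Continuous fun x => sin x ^ 2 * cos x ^ 2 * log (sin x) := by
  have : Continuous fun x => cos x ^ 2 * (sin x ^ 2 * log (sin x)) :=
    (continuous_cos.pow 2).mul continuous_sin_sq_mul_log_sin
  exact this.congr fun x => by ring

lemma continuous_sin_pow_three_mul_cos_mul_log_sin :
    Continuous fun x => sin x ^ 3 * cos x * log (sin x) := by
  have : Continuous fun x => sin x * cos x * (sin x ^ 2 * log (sin x)) :=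
    (continuous_sin.mul continuous_cos).mul continuous_sin_sq_mul_log_sin
  exact this.congr fun x => by ring

lemma integral_sin_sq_mul_cos_sq_zero_pi_div_two :
    ∫ x in (0:ℝ)..π / 2, sin x ^ 2 * cos x ^ 2 = π / 16 := by
  rw [integral_sin_sq_mul_cos_sq, show 4 * (π / 2) = 2 * π by ring, sin_two_pi]
  simp only [mul_zero, sin_zero, sub_zero, zero_div]
  ring

lemma integral_comp_two_mul_zero_pi_div_two {f : ℝ → ℝ} (hf : Continuous f)
    (hsymm : ∀ x, f (π - x) = f x) :
    ∫ x in (0:ℝ)..π / 2, f (2 * x) = ∫ x in (0:ℝ)..π / 2, f x := by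
  have hrefl : ∫ x in π / 2..π, f x = ∫ x in (0:ℝ)..π / 2, f x := by
    simpa [hsymm, show π - π / 2 = π / 2 by ring] using
      (integral_comp_sub_left (a := 0) (b := π / 2) f π).symm
  rw [integral_comp_mul_left f two_ne_zero, mul_zero, show 2 * (π / 2) = π by ring,
    ← integral_add_adjacent_intervals (hf.intervalIntegrable 0 (π / 2))
      (hf.intervalIntegrable (π / 2) π), hrefl, smul_eq_mul]
  ring

lemma hasDerivAt_sin_pow_three_mul_cos_mul_log_sin {x : ℝ} (hx : sin x ≠ 0) :
    HasDerivAt (fun x => sin x ^ 3 * cos x * log (sin x))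
      (4 * (sin x ^ 2 * cos x ^ 2 * log (sin x)) - sin x ^ 2 * log (sin x)
        + sin x ^ 2 * cos x ^ 2) x := by
  refine ((((hasDerivAt_sin x).pow 3).mul (hasDerivAt_cos x)).mul
    ((hasDerivAt_sin x).log hx)).congr_deriv ?_
  simp only [Pi.pow_apply, Pi.mul_apply]
  field_simp
  linear_combination (-sin x ^ 2 * log (sin x)) * sin_sq_add_cos_sq x

lemma integral_sin_sq_mul_log_sin_sub_four_mul :
    (∫ x in (0:ℝ)..π / 2, sin x ^ 2 * log (sin x))
      - 4 * ∫ x in (0:ℝ)..π / 2, sin x ^ 2 * cos x ^ 2 * log (sin x) = π / 16 := by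
  have hW := continuous_sin_sq_mul_log_sin
  have hK := continuous_sin_sq_mul_cos_sq_mul_log_sin
  have hFTC := integral_eq_sub_of_hasDeriv_right_of_le (a := 0) (b := π / 2) (by positivity)
    continuous_sin_pow_three_mul_cos_mul_log_sin.continuousOn
    (fun x hx => (hasDerivAt_sin_pow_three_mul_cos_mul_log_sin
      (sin_pos_of_pos_of_lt_pi hx.1 (by linarith [hx.2, pi_pos])).ne').hasDerivWithinAt)
    (Continuous.intervalIntegrable (by fun_prop) _ _)
  rw [integral_add, integral_sub, integral_const_mul,
    integral_sin_sq_mul_cos_sq_zero_pi_div_two] at hFTC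
  · simp only [sin_pi_div_two, cos_pi_div_two, sin_zero, mul_zero, zero_mul, sub_zero,
      zero_pow three_ne_zero] at hFTC
    linarith
  · exact (hK.const_mul 4).intervalIntegrable _ _
  · exact hW.intervalIntegrable _ _
  · exact ((hK.const_mul 4).sub hW).intervalIntegrable _ _
  · exact ((continuous_sin.pow 2).mul (continuous_cos.pow 2)).intervalIntegrable _ _

lemma integral_sin_sq_mul_cos_sq_mul_log_cos :
    ∫ x in (0:ℝ)..π / 2, sin x ^ 2 * cos x ^ 2 * log (cos x)
      = ∫ x in (0:ℝ)..π / 2, sin x ^ 2 * cos x ^ 2 * log (sin x) := by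
  have h := integral_comp_sub_left (a := 0) (b := π / 2)
    (fun x => sin x ^ 2 * cos x ^ 2 * log (sin x)) (π / 2)
  simp only [sin_pi_div_two_sub, cos_pi_div_two_sub, sub_self, sub_zero] at h
  rw [← h]
  congr 1 with x
  ring

lemma sin_sq_mul_cos_sq_mul_log_sin_add_log_cos (x : ℝ) :
    sin x ^ 2 * cos x ^ 2 * log (sin x) + sin x ^ 2 * cos x ^ 2 * log (cos x) =
      sin (2 * x) ^ 2 * log (sin (2 * x)) / 4 - log 2 * (sin x ^ 2 * cos x ^ 2) := by
  rcases eq_or_ne (sin x) 0 with hs | hs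
  · simp [sin_two_mul, hs]
  rcases eq_or_ne (cos x) 0 with hc | hc
  · simp [sin_two_mul, hc]
  rw [sin_two_mul, log_mul (by positivity) hc, log_mul two_ne_zero hs]
  ring

lemma integral_sin_sq_mul_log_sin_sub_eight_mul :
    (∫ x in (0:ℝ)..π / 2, sin x ^ 2 * log (sin x))
      - 8 * ∫ x in (0:ℝ)..π / 2, sin x ^ 2 * cos x ^ 2 * log (sin x) = π / 4 * log 2 := by
  have hdup := integral_comp_two_mul_zero_pi_div_two continuous_sin_sq_mul_log_sin
    (fun x => by simp only [sin_pi_sub])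
  have h := integral_congr (μ := MeasureTheory.volume) (a := 0) (b := π / 2)
    (fun x _ => sin_sq_mul_cos_sq_mul_log_sin_add_log_cos x)
  rw [integral_add, integral_sin_sq_mul_cos_sq_mul_log_cos, integral_sub, integral_div, hdup,
    integral_const_mul, integral_sin_sq_mul_cos_sq_zero_pi_div_two] at h
  · linarith
  · exact ((continuous_sin_sq_mul_log_sin.comp (continuous_const_mul 2)).div_const 4
      ).intervalIntegrable _ _
  · exact (((continuous_sin.pow 2).mul (continuous_cos.pow 2)).const_mul _).intervalIntegrable _ _
  · exact continuous_sin_sq_mul_cos_sq_mul_log_sin.intervalIntegrable _ _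
  · have : Continuous fun x => sin x ^ 2 * (cos x ^ 2 * log (cos x)) :=
      (continuous_sin.pow 2).mul (continuous_sq_mul_log.comp continuous_cos)
    exact (this.congr fun x => by ring).intervalIntegrable _ _

lemma integral_sin_sq_mul_cos_sq_mul_log_sin :
    ∫ x in (0:ℝ)..π / 2, sin x ^ 2 * cos x ^ 2 * log (sin x) = π / 64 - π / 16 * log 2 := by
  linarith [integral_sin_sq_mul_log_sin_sub_four_mul, integral_sin_sq_mul_log_sin_sub_eight_mul]

lemma log_mul_sqrt_sub_mul_eq {c : ℝ} (hc : 0 ≤ c) (x : ℝ) :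
    log x * √((c - x) * x) = 2 * (√x * log √x) * √(c - x) := by
  rcases le_or_gt 0 x with hx | hx
  · rw [sqrt_mul' _ hx, log_sqrt hx]
    ring
  · rw [sqrt_eq_zero_of_nonpos hx.le, sqrt_eq_zero_of_nonpos (by nlinarith)]
    simp

lemma continuous_log_mul_sqrt_sub_mul {c : ℝ} (hc : 0 ≤ c) :
    Continuous fun x => log x * √((c - x) * x) := by
  simp only [log_mul_sqrt_sub_mul_eq hc]
  exact (continuous_const.mul (continuous_mul_log.comp continuous_sqrt)).mul
    (continuous_sqrt.comp (continuous_const.sub continuous_id))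

lemma log_mul_sqrt_sub_mul_comp_sin_sq {s x : ℝ} (hs : 0 < s) (hx : x ∈ Set.Icc 0 (π / 2)) :
    log (4 * s * sin x ^ 2) * √((4 * s - 4 * s * sin x ^ 2) * (4 * s * sin x ^ 2))
        * (8 * s * sin x * cos x) =
      32 * s ^ 2 * log (4 * s) * (sin x ^ 2 * cos x ^ 2)
        + 64 * s ^ 2 * (sin x ^ 2 * cos x ^ 2 * log (sin x)) := by
  have hsin : 0 ≤ sin x := sin_nonneg_of_nonneg_of_le_pi hx.1 (by linarith [hx.2, pi_pos])
  have hcos : 0 ≤ cos x := cos_nonneg_of_mem_Icc ⟨by linarith [hx.1, pi_pos], hx.2⟩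
  have hsqrt : √((4 * s - 4 * s * sin x ^ 2) * (4 * s * sin x ^ 2)) = 4 * s * sin x * cos x := by
    rw [← sqrt_sq (by positivity : 0 ≤ 4 * s * sin x * cos x)]
    congr 1
    linear_combination (-16 * s ^ 2 * sin x ^ 2) * sin_sq_add_cos_sq x
  rcases hsin.eq_or_lt with h0 | hpos
  · simp [← h0]
  rw [hsqrt, log_mul (by positivity) (by positivity), log_pow]
  push_cast
  ring

theorem integral_log_mul_sqrt_sub_mul {s : ℝ} (hs : 0 < s) :
    ∫ x in (0:ℝ)..4 * s, log x * √((4 * s - x) * x) = 2 * π * s ^ 2 * log s + π * s ^ 2 := by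
  have hsubst := integral_comp_mul_deriv (a := 0) (b := π / 2)
    (f := fun x => 4 * s * sin x ^ 2) (f' := fun x => 8 * s * sin x * cos x)
    (fun x _ => (((hasDerivAt_sin x).pow 2).const_mul (4 * s)).congr_deriv (by ring))
    (by fun_prop) (continuous_log_mul_sqrt_sub_mul (by positivity : 0 ≤ 4 * s))
  simp only [Function.comp_def, sin_zero, sin_pi_div_two, ne_eq, OfNat.ofNat_ne_zero,
    not_false_eq_true, zero_pow, one_pow, mul_zero, mul_one] at hsubst
  rw [← hsubst, integral_congr (fun x hx => log_mul_sqrt_sub_mul_comp_sin_sq hs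
      (Set.uIcc_of_le (by positivity : (0:ℝ) ≤ π / 2) ▸ hx)),
    integral_add, integral_const_mul, integral_const_mul,
    integral_sin_sq_mul_cos_sq_zero_pi_div_two, integral_sin_sq_mul_cos_sq_mul_log_sin,
    log_mul four_ne_zero hs.ne', log_four_eq]
  · ring
  · exact (((continuous_sin.pow 2).mul (continuous_cos.pow 2)).const_mul _).intervalIntegrable _ _
  · exact (continuous_sin_sq_mul_cos_sq_mul_log_sin.const_mul _).intervalIntegrable _ _

theorem stmt16_general (α l0 sg2 : ℝ) (hα : 2 ≤ α) (hl0' : l0 < 1)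
    (hsg2 : sg2 = (1 - l0) / α) :
    -(α / (2 * Real.pi * sg2)) *
        (∫ x in (0:ℝ)..(4 * sg2), Real.log x * Real.sqrt ((4 * sg2 - x) * x))
      - l0 * Real.log l0 =
    (1 - l0) * Real.log (α / (4 * (1 - l0))) - l0 / 2 * (4 * Real.log 2 - 1)
      - l0 * Real.log l0 + 2 * Real.log 2 - 1 / 2 := by
  have hα₀ : 0 < α := by linarith
  have hl0₁ : 0 < 1 - l0 := by linarith
  have hs : 0 < sg2 := hsg2 ▸ div_pos hl0₁ hα₀
  rw [integral_log_mul_sqrt_sub_mul hs, hsg2, log_div hl0₁.ne' hα₀.ne',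
    log_div hα₀.ne' (by positivity), log_mul four_ne_zero hl0₁.ne', log_four_eq]
  field_simp
  ring

theorem stmt16 (α l0 sg2 : ℝ) (hα : 2 ≤ α) (hl0 : 0 < l0) (hl0' : l0 < 1)
    (hsg2 : sg2 = (1 - l0) / α) :
    -(α / (2 * Real.pi * sg2)) *
        (∫ x in (0:ℝ)..(4 * sg2), Real.log x * Real.sqrt ((4 * sg2 - x) * x))
      - l0 * Real.log l0 =
    (1 - l0) * Real.log (α / (4 * (1 - l0))) - l0 / 2 * (4 * Real.log 2 - 1)
      - l0 * Real.log l0 + 2 * Real.log 2 - 1 / 2 :=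
  stmt16_general α l0 sg2 hα hl0' hsg2
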